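/- arXiv:2203.03834 — 7 statements merged into one kernel-verified Lean document; each statement's English description precedes it below -/
import Mathlib

section
/- Let D ⊆ ℝ² be open and let w, B, H, u : D → ℂ′ be C² maps, and fix ε̃ ∈ {1, −1, i′, −i′}. For μ ∈ S¹₁ define the 2×2 matrices over ℂ′: U^μ := [[¼∂_z w + ½(∂_z H)·ε̃·exp(−w/2)·exp(u/2), −μ⁻¹·ε̃·exp(w/2)], [μ⁻¹·B·ε̃·exp(−w/2), −¼∂_z w]] and V^μ := [[−¼∂_z̄ w, −μ·B̄·ε̃·exp(−w/2)], [μ·ε̃·exp(w/2), ¼∂_z̄ w + ½(∂_z̄ H)·ε̃·exp(−w/2)·exp(u/2)]]. Then the zero-curvature equation ∂_z̄ U^μ − ∂_z V^μ + [V^μ, U^μ] = 0 holds on D for every μ ∈ S¹₁ if and only if the following equations hold on D: (i) (∂_z̄ H)·exp(u/2) = 0 and ∂_z̄ B + ½B(∂_z̄ H)ε̃·exp(−w/2)·exp(u/2) = 0; (ii) ½∂_z∂_z̄ w + exp(w) − B·B̄·exp(−w) + ½(∂_z∂_z̄ H + p)·ε̃·exp(−w/2)·exp(u/2) = 0 both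 for p = (∂_z H)·∂_z̄(−w/2 + u/2) and for p = (∂_z̄ H)·∂_z(−w/2 + u/2); (iii) ∂_z B̄ + ½B̄(∂_z H)ε̃·exp(−w/2)·exp(u/2) = 0 and (∂_z H)·exp(u/2) = 0. -/
noncomputable section

/-- Para-complex numbers modeled as the product ring ℝ × ℝ. -/
abbrev Cp : Type := ℝ × ℝ

/-- The para-complex unit i′ = (1, -1), satisfying i′² = 1. -/
def ip : Cp := (1, -1)

/-- Para-complex conjugation. -/
def pconj (z : Cp) : Cp := (z.2, z.1)

/-- Real part of a para-complex number. -/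
def pRe (z : Cp) : ℝ := (z.1 + z.2) / 2

/-- Imaginary part of a para-complex number. -/
def pIm (z : Cp) : ℝ := (z.1 - z.2) / 2

/-- Embedding of ℝ into the para-complex numbers. -/
def oR (r : ℝ) : Cp := (r, r)

/-- The exponential of the Banach algebra ℝ × ℝ (componentwise real exponential). -/
def pexp (z : Cp) : Cp := (Real.exp z.1, Real.exp z.2)

/-- The para-complex derivative ∂_z f = ½(∂ₓf + i′ ∂_y f). -/
def dz (f : Cp → Cp) (p : Cp) : Cp :=
  oR (1/2) * (fderiv ℝ f p (1, 0) + ip * fderiv ℝ f p (0, 1))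

/-- The para-complex derivative ∂_z̄ f = ½(∂ₓf − i′ ∂_y f). -/
def dzbar (f : Cp → Cp) (p : Cp) : Cp :=
  oR (1/2) * (fderiv ℝ f p (1, 0) - ip * fderiv ℝ f p (0, 1))

/-- Entrywise ∂_z of a matrix-valued map. -/
def dzM (A : Cp → Matrix (Fin 2) (Fin 2) Cp) (p : Cp) : Matrix (Fin 2) (Fin 2) Cp :=
  Matrix.of fun i j => dz (fun q => A q i j) p

/-- Entrywise ∂_z̄ of a matrix-valued map. -/
def dzbarM (A : Cp → Matrix (Fin 2) (Fin 2) Cp) (p : Cp) : Matrix (Fin 2) (Fin 2) Cp :=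
  Matrix.of fun i j => dzbar (fun q => A q i j) p

/-- The matrix U^μ. -/
def Umu (w B H u : Cp → Cp) (ε μ : Cp) (q : Cp) : Matrix (Fin 2) (Fin 2) Cp :=
  !![oR (1/4) * dz w q + oR (1/2) * dz H q * ε * pexp (-(w q) / 2) * pexp (u q / 2),
      -(μ⁻¹ * ε * pexp (w q / 2));
     μ⁻¹ * B q * ε * pexp (-(w q) / 2),
      -(oR (1/4) * dz w q)]

/-- The matrix V^μ. -/
def Vmu (w B H u : Cp → Cp) (ε μ : Cp) (q : Cp) : Matrix (Fin 2) (Fin 2) Cp :=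
  !![-(oR (1/4) * dzbar w q),
      -(μ * pconj (B q) * ε * pexp (-(w q) / 2));
     μ * ε * pexp (w q / 2),
      oR (1/4) * dzbar w q + oR (1/2) * dzbar H q * ε * pexp (-(w q) / 2) * pexp (u q / 2)]

/-!
Expanding the zero-curvature expression by the product and chain rules, with
`∂_z ∂_z̄ = ∂_z̄ ∂_z` on `C²` maps, `ε² = 1` and `μ⁻¹ = μ̄`, gives a matrix whose diagonal entries
are `±`(ii) and whose off-diagonal entries have the form `μ̄ P + μ Q`, where `P` and `Q` are the
equations (i) and (iii) multiplied by the units `½` and `ε exp(-w/2)`. Since both `μ = 1` and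
`μ = (2, ½)` lie in `S¹₁`, the vanishing of `μ̄ P + μ Q` on `S¹₁` separates `P = 0` from `Q = 0`.
-/

namespace ParaComplex

/-- Common generalization of `dz` and `dzbar`, so that their calculus is developed once. -/
def paraDeriv (c : Cp) (f : Cp → Cp) (q : Cp) : Cp :=
  oR (1/2) * (fderiv ℝ f q (1, 0) + c * fderiv ℝ f q (0, 1))

theorem dz_eq_paraDeriv (f : Cp → Cp) : dz f = paraDeriv ip f := rfl

theorem dzbar_eq_paraDeriv (f : Cp → Cp) : dzbar f = paraDeriv (-ip) f := by
  funext q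
  simp only [dzbar, paraDeriv, neg_mul, sub_eq_add_neg]

theorem oR_half_add_half : oR (1/2) + oR (1/2) = 1 := by
  ext <;> simp [oR] <;> norm_num

theorem oR_quarter_add_quarter : oR (1/4) + oR (1/4) = oR (1/2) := by
  ext <;> simp [oR] <;> norm_num

theorem isUnit_oR {r : ℝ} (hr : r ≠ 0) : IsUnit (oR r) :=
  IsUnit.of_mul_eq_one (oR r⁻¹) (by ext <;> simp [oR, hr])

theorem div_two_eq_oR_mul (z : Cp) : z / 2 = oR (1/2) * z := by
  ext <;> simp [oR] <;> ring

theorem inv_eq_pconj {μ : Cp} (hμ : μ * pconj μ = 1) : μ⁻¹ = pconj μ := by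
  obtain ⟨h₁, h₂⟩ := Prod.ext_iff.mp hμ
  exact Prod.ext (inv_eq_of_mul_eq_one_right h₁) (inv_eq_of_mul_eq_one_right h₂)

theorem pexp_add (a b : Cp) : pexp (a + b) = pexp a * pexp b := by
  ext <;> simp [pexp, Real.exp_add]

theorem pexp_eq_half_mul_half (z : Cp) : pexp z = pexp (oR (1/2) * z) * pexp (oR (1/2) * z) := by
  rw [← pexp_add, ← add_mul, oR_half_add_half, one_mul]

theorem pexp_half_mul_neg_half (z : Cp) : pexp (oR (1/2) * z) * pexp (oR (1/2) * -z) = 1 := by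
  rw [← pexp_add, ← mul_add, add_neg_cancel, mul_zero]
  ext <;> simp [pexp]

theorem isUnit_pexp (z : Cp) : IsUnit (pexp z) :=
  IsUnit.of_mul_eq_one (pexp (-z)) (by rw [← pexp_add, add_neg_cancel]; ext <;> simp [pexp])

@[fun_prop]
theorem differentiableAt_pexp {f : Cp → Cp} {q : Cp} (hf : DifferentiableAt ℝ f q) :
    DifferentiableAt ℝ (fun x => pexp (f x)) q :=
  (hf.hasFDerivAt.fst.exp.prodMk hf.hasFDerivAt.snd.exp).differentiableAt

@[fun_prop]
theorem differentiableAt_pconj {f : Cp → Cp} {q : Cp} (hf : DifferentiableAt ℝ f q) :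
    DifferentiableAt ℝ (fun x => pconj (f x)) q :=
  hf.snd.prodMk hf.fst

section Calculus

variable {c : Cp} {f g : Cp → Cp} {q : Cp}

theorem fderiv_pexp_apply (hf : DifferentiableAt ℝ f q) (v : Cp) :
    fderiv ℝ (fun x => pexp (f x)) q v = pexp (f q) * fderiv ℝ f q v := by
  simp only [pexp, (hf.hasFDerivAt.fst.exp.prodMk hf.hasFDerivAt.snd.exp).fderiv]
  ext <;> simp

theorem paraDeriv_const (a : Cp) : paraDeriv c (fun _ => a) q = 0 := by
  simp [paraDeriv]

theorem paraDeriv_add (hf : DifferentiableAt ℝ f q) (hg : DifferentiableAt ℝ g q) :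
    paraDeriv c (fun x => f x + g x) q = paraDeriv c f q + paraDeriv c g q := by
  simp only [paraDeriv, fderiv_fun_add hf hg, add_apply]
  ring

theorem paraDeriv_neg : paraDeriv c (fun x => -f x) q = -paraDeriv c f q := by
  simp only [paraDeriv, fderiv_fun_neg, neg_apply]
  ring

theorem paraDeriv_mul (hf : DifferentiableAt ℝ f q) (hg : DifferentiableAt ℝ g q) :
    paraDeriv c (fun x => f x * g x) q = paraDeriv c f q * g q + f q * paraDeriv c g q := by
  simp only [paraDeriv, fderiv_fun_mul hf hg, add_apply, smul_apply, smul_eq_mul]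
  ring

theorem paraDeriv_pexp (hf : DifferentiableAt ℝ f q) :
    paraDeriv c (fun x => pexp (f x)) q = pexp (f q) * paraDeriv c f q := by
  simp only [paraDeriv, fderiv_pexp_apply hf]
  ring

theorem hasFDerivAt_fderiv_apply (h : ContDiffAt ℝ 2 f q) (v : Cp) :
    HasFDerivAt (fun p => fderiv ℝ f p v) ((fderiv ℝ (fderiv ℝ f) q).flip v) q := by
  have hD : HasFDerivAt (fderiv ℝ f) (fderiv ℝ (fderiv ℝ f) q) q :=
    ((h.fderiv_right (m := 1) le_rfl).differentiableAt one_ne_zero).hasFDerivAt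
  simpa using hD.clm_apply (hasFDerivAt_const v q)

theorem differentiableAt_paraDeriv (h : ContDiffAt ℝ 2 f q) :
    DifferentiableAt ℝ (paraDeriv c f) q := by
  have := fun v => (hasFDerivAt_fderiv_apply h v).differentiableAt
  unfold paraDeriv
  fun_prop

theorem fderiv_paraDeriv_apply (h : ContDiffAt ℝ 2 f q) (v : Cp) :
    fderiv ℝ (paraDeriv c f) q v
      = oR (1/2) * (fderiv ℝ (fderiv ℝ f) q v (1, 0) + c * fderiv ℝ (fderiv ℝ f) q v (0, 1)) := by
  have hv := hasFDerivAt_fderiv_apply h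
  have hP : HasFDerivAt (paraDeriv c f) _ q :=
    ((hv (1, 0)).add ((hv (0, 1)).const_mul c)).const_mul (oR (1/2))
  simp [hP.fderiv, mul_add]

theorem paraDeriv_comm {a b : Cp} (h : ContDiffAt ℝ 2 f q) :
    paraDeriv a (paraDeriv b f) q = paraDeriv b (paraDeriv a f) q := by
  have hsymm := h.isSymmSndFDerivAt (by simp) (1, 0) (0, 1)
  simp only [paraDeriv, fderiv_paraDeriv_apply h] at *
  rw [hsymm]
  ring

end Calculus

theorem zeroCurvature_eq {w B H u : Cp → Cp} {ε μ q : Cp}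
    (hw : ContDiffAt ℝ 2 w q) (hB : DifferentiableAt ℝ B q)
    (hH : ContDiffAt ℝ 2 H q) (hu : DifferentiableAt ℝ u q)
    (hε : ε * ε = 1) (hμ : μ * pconj μ = 1) :
    dzbarM (Umu w B H u ε μ) q - dzM (Vmu w B H u ε μ) q
      + (Vmu w B H u ε μ q * Umu w B H u ε μ q
          - Umu w B H u ε μ q * Vmu w B H u ε μ q)
    = !![oR (1/2) * dz (dzbar w) q + pexp (w q) - B q * pconj (B q) * pexp (-(w q))
            + oR (1/2) * (dz (dzbar H) q
                + dz H q * dzbar (fun r => -(w r) / 2 + u r / 2) q)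
              * ε * pexp (-(w q) / 2) * pexp (u q / 2),
        pconj μ * (oR (1/2) * (dzbar H q * pexp (u q / 2)))
          + μ * (ε * pexp (-(w q) / 2) * (dz (fun r => pconj (B r)) q
              + oR (1/2) * pconj (B q) * dz H q * ε * pexp (-(w q) / 2) * pexp (u q / 2)));
        pconj μ * (ε * pexp (-(w q) / 2) * (dzbar B q
              + oR (1/2) * B q * dzbar H q * ε * pexp (-(w q) / 2) * pexp (u q / 2)))
          + μ * (oR (1/2) * (dz H q * pexp (u q / 2))),
        -(oR (1/2) * dz (dzbar w) q + pexp (w q) - B q * pconj (B q) * pexp (-(w q))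
            + oR (1/2) * (dz (dzbar H) q
                + dzbar H q * dz (fun r => -(w r) / 2 + u r / 2) q)
              * ε * pexp (-(w q) / 2) * pexp (u q / 2))] := by
  have hw₁ := hw.differentiableAt two_ne_zero
  have hH₁ := hH.differentiableAt two_ne_zero
  have hw₂ := differentiableAt_paraDeriv (c := ip) hw
  have hH₂ := differentiableAt_paraDeriv (c := ip) hH
  have hw₂' := differentiableAt_paraDeriv (c := -ip) hw
  have hH₂' := differentiableAt_paraDeriv (c := -ip) hH
  refine Matrix.ext fun i j => ?_
  fin_cases i <;> fin_cases j <;>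
    simp only [dzbarM, dzM, Umu, Vmu, Matrix.sub_apply, Matrix.add_apply, Matrix.of_apply,
      Matrix.mul_apply, Fin.sum_univ_two, Matrix.cons_val', Matrix.cons_val_zero,
      Matrix.cons_val_one, Matrix.empty_val', Matrix.cons_val_fin_one, Fin.isValue, Fin.zero_eta,
      Fin.mk_one, dz_eq_paraDeriv, dzbar_eq_paraDeriv] <;>
    simp (disch := fun_prop) only [paraDeriv_add, paraDeriv_mul, paraDeriv_neg, paraDeriv_pexp,
      paraDeriv_const, div_two_eq_oR_mul, paraDeriv_comm (a := ip) hw,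
      paraDeriv_comm (a := ip) hH, inv_eq_pconj hμ]
  all_goals
    have hexp := pexp_eq_half_mul_half (w q)
    have hexp' := pexp_eq_half_mul_half (-w q)
    have hab := pexp_half_mul_neg_half (w q)
    set a := pexp (oR (1/2) * w q)
    set b := pexp (oR (1/2) * -w q)
  -- `¼ + ¼ = ½` merges the contributions of the derivatives and of the commutator;
  -- everything else cancels by `ε² = 1`, `μ μ̄ = 1` and `exp (w/2) exp (-w/2) = 1`.
  · linear_combination paraDeriv (-ip) (paraDeriv ip w) q * oR_quarter_add_quarter
      + (a * a - B q * pconj (B q) * (b * b)) * (ε * ε) * hμ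
      + (a * a - B q * pconj (B q) * (b * b)) * hε - hexp + B q * pconj (B q) * hexp'
  · linear_combination (paraDeriv (-ip) w q * pconj μ * ε * a
        + paraDeriv ip w q * pconj (B q) * μ * ε * b) * oR_quarter_add_quarter
      + oR (1/2) * paraDeriv (-ip) H q * pexp (oR (1/2) * u q) * pconj μ * (a * b) * hε
      + oR (1/2) * paraDeriv (-ip) H q * pexp (oR (1/2) * u q) * pconj μ * hab
  · linear_combination (paraDeriv (-ip) w q * pconj μ * B q * ε * b
        + paraDeriv ip w q * μ * ε * a) * oR_quarter_add_quarter
      + oR (1/2) * paraDeriv ip H q * pexp (oR (1/2) * u q) * μ * (a * b) * hε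
      + oR (1/2) * paraDeriv ip H q * pexp (oR (1/2) * u q) * μ * hab
  · linear_combination -paraDeriv (-ip) (paraDeriv ip w) q * oR_quarter_add_quarter
      - (a * a - B q * pconj (B q) * (b * b)) * (ε * ε) * hμ
      - (a * a - B q * pconj (B q) * (b * b)) * hε + hexp - B q * pconj (B q) * hexp'

theorem forall_pconj_mul_add_mul_eq_zero_iff {P Q : Cp} :
    (∀ μ : Cp, μ * pconj μ = 1 → 0 < pRe μ → pconj μ * P + μ * Q = 0) ↔ P = 0 ∧ Q = 0 := by
  refine ⟨fun h => ?_, by rintro ⟨rfl, rfl⟩; simp⟩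
  have h₁ := h 1 (by ext <;> simp [pconj]) (by simp [pRe])
  have h₂ := h (2, 1/2) (by ext <;> norm_num [pconj]) (by norm_num [pRe])
  simp only [pconj, Prod.ext_iff] at h₁ h₂
  constructor <;> ext <;> simp at h₁ h₂ ⊢ <;> linarith

theorem forall_matrix_eq_zero_iff {E₁ E₂ P₁ Q₁ P₂ Q₂ : Cp} :
    (∀ μ : Cp, μ * pconj μ = 1 → 0 < pRe μ →
      !![E₁, pconj μ * P₁ + μ * Q₁; pconj μ * P₂ + μ * Q₂, -E₂] = 0) ↔
    (P₁ = 0 ∧ P₂ = 0) ∧ (E₁ = 0 ∧ E₂ = 0) ∧ (Q₁ = 0 ∧ Q₂ = 0) := by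
  simp only [← Matrix.ext_iff, Fin.forall_fin_two, Matrix.of_apply, Matrix.cons_val',
    Matrix.cons_val_zero, Matrix.cons_val_one, Matrix.empty_val', Matrix.cons_val_fin_one,
    Matrix.zero_apply, neg_eq_zero]
  refine ⟨fun h => ?_, by rintro ⟨⟨rfl, rfl⟩, ⟨rfl, rfl⟩, rfl, rfl⟩; simp⟩
  obtain ⟨⟨hE₁, -⟩, -, hE₂⟩ := h 1 (by ext <;> simp [pconj]) (by simp [pRe])
  obtain ⟨hP₁, hQ₁⟩ := forall_pconj_mul_add_mul_eq_zero_iff.1 fun μ hμ hRe => (h μ hμ hRe).1.2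
  obtain ⟨hP₂, hQ₂⟩ := forall_pconj_mul_add_mul_eq_zero_iff.1 fun μ hμ hRe => (h μ hμ hRe).2.1
  exact ⟨⟨hP₁, hP₂⟩, ⟨hE₁, hE₂⟩, hQ₁, hQ₂⟩

theorem forall_zeroCurvature_eq_zero_iff {w B H u : Cp → Cp} {ε q : Cp}
    (hw : ContDiffAt ℝ 2 w q) (hB : DifferentiableAt ℝ B q)
    (hH : ContDiffAt ℝ 2 H q) (hu : DifferentiableAt ℝ u q) (hε : ε * ε = 1) :
    (∀ μ : Cp, μ * pconj μ = 1 → 0 < pRe μ →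
        dzbarM (Umu w B H u ε μ) q - dzM (Vmu w B H u ε μ) q
          + (Vmu w B H u ε μ q * Umu w B H u ε μ q
              - Umu w B H u ε μ q * Vmu w B H u ε μ q) = 0)
    ↔ (dzbar H q * pexp (u q / 2) = 0 ∧
          dzbar B q
            + oR (1/2) * B q * dzbar H q * ε * pexp (-(w q) / 2) * pexp (u q / 2) = 0) ∧
        (oR (1/2) * dz (dzbar w) q + pexp (w q) - B q * pconj (B q) * pexp (-(w q))
            + oR (1/2) * (dz (dzbar H) q
                + dz H q * dzbar (fun r => -(w r) / 2 + u r / 2) q)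
              * ε * pexp (-(w q) / 2) * pexp (u q / 2) = 0 ∧
          oR (1/2) * dz (dzbar w) q + pexp (w q) - B q * pconj (B q) * pexp (-(w q))
            + oR (1/2) * (dz (dzbar H) q
                + dzbar H q * dz (fun r => -(w r) / 2 + u r / 2) q)
              * ε * pexp (-(w q) / 2) * pexp (u q / 2) = 0) ∧
        (dz (fun r => pconj (B r)) q
            + oR (1/2) * pconj (B q) * dz H q * ε * pexp (-(w q) / 2) * pexp (u q / 2) = 0 ∧
          dz H q * pexp (u q / 2) = 0) := by
  have hhalf : IsUnit (oR (1/2)) := isUnit_oR (by norm_num)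
  have hunit : IsUnit (ε * pexp (-(w q) / 2)) :=
    (IsUnit.of_mul_eq_one ε hε).mul (isUnit_pexp _)
  simp +contextual only [zeroCurvature_eq hw hB hH hu hε]
  rw [forall_matrix_eq_zero_iff]
  simp only [hhalf.mul_right_eq_zero, hunit.mul_right_eq_zero]

end ParaComplex

/-- The zero-curvature equation ∂_z̄U^μ − ∂_zV^μ + [V^μ, U^μ] = 0 holds on D for every
μ ∈ S¹₁ iff the structure equations (i), (ii), (iii) hold on D. -/
theorem zero_curvature_iff (D : Set Cp) (hD : IsOpen D)
    (w B H u : Cp → Cp)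
    (hw : ContDiffOn ℝ 2 w D) (hB : ContDiffOn ℝ 2 B D)
    (hH : ContDiffOn ℝ 2 H D) (hu : ContDiffOn ℝ 2 u D)
    (ε : Cp) (hε : ε = 1 ∨ ε = -1 ∨ ε = ip ∨ ε = -ip) :
    (∀ μ : Cp, μ * pconj μ = 1 → 0 < pRe μ → ∀ q ∈ D,
        dzbarM (Umu w B H u ε μ) q - dzM (Vmu w B H u ε μ) q
          + (Vmu w B H u ε μ q * Umu w B H u ε μ q
              - Umu w B H u ε μ q * Vmu w B H u ε μ q) = 0)
    ↔ (∀ q ∈ D,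
        (dzbar H q * pexp (u q / 2) = 0 ∧
          dzbar B q
            + oR (1/2) * B q * dzbar H q * ε * pexp (-(w q) / 2) * pexp (u q / 2) = 0) ∧
        (oR (1/2) * dz (dzbar w) q + pexp (w q) - B q * pconj (B q) * pexp (-(w q))
            + oR (1/2) * (dz (dzbar H) q
                + dz H q * dzbar (fun r => -(w r) / 2 + u r / 2) q)
              * ε * pexp (-(w q) / 2) * pexp (u q / 2) = 0 ∧
          oR (1/2) * dz (dzbar w) q + pexp (w q) - B q * pconj (B q) * pexp (-(w q))
            + oR (1/2) * (dz (dzbar H) q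
                + dzbar H q * dz (fun r => -(w r) / 2 + u r / 2) q)
              * ε * pexp (-(w q) / 2) * pexp (u q / 2) = 0) ∧
        (dz (fun r => pconj (B r)) q
            + oR (1/2) * pconj (B q) * dz H q * ε * pexp (-(w q) / 2) * pexp (u q / 2) = 0 ∧
          dz H q * pexp (u q / 2) = 0)) := by
  have hε₂ : ε * ε = 1 := by rcases hε with rfl | rfl | rfl | rfl <;> ext <;> simp [ip]
  have pointwise (q : Cp) (hq : q ∈ D) := by
    have hC {f : Cp → Cp} (hf : ContDiffOn ℝ 2 f D) := hf.contDiffAt (hD.mem_nhds hq)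
    exact ParaComplex.forall_zeroCurvature_eq_zero_iff (hC hw)
      ((hC hB).differentiableAt two_ne_zero) (hC hH) ((hC hu).differentiableAt two_ne_zero) hε₂
  exact ⟨fun h q hq => (pointwise q hq).1 fun μ hμ hRe => h μ hμ hRe q hq,
    fun h μ hμ hRe q hq => (pointwise q hq).2 (h q hq) μ hμ hRe⟩
end
end

section
/- Let D ⊆ ℝ² be open, ψ₁, ψ₂ : D → ℂ′ of class C¹, and H : D → ℝ of class C¹. Define e^{u/2} := 2(ψ₂ψ̄₂ + ψ₁ψ̄₁), h := 2(ψ₂ψ̄₂ − ψ₁ψ̄₁), and the Dirac potential 𝒰 := −(H/2)·e^{u/2} + (i′/4)·h. Assume the nonlinear Dirac equations ∂_z ψ₂ + 𝒰ψ₁ = 0 and −∂_z̄ ψ₁ + 𝒰ψ₂ = 0 hold on D, and that 𝒰 = ε̃·exp(w/2) for some ε̃ ∈ {1, −1, i′, −i′} and some C¹ map w : D → ℂ′. Define φ₃ := 2ψ₁ψ̄₂, A := 2(ψ₁·∂_z(ψ̄₂) − ψ̄₂·∂_z ψ₁) − 4i′ψ₁²ψ̄₂², and B := ¼(2H − i′)·A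 − ¼φ₃². Then the row vector ψ̃ = (ψ₁, ψ₂) satisfies the Lax pair system ∂_z ψ̃ = ψ̃·Ũ and ∂_z̄ ψ̃ = ψ̃·Ṽ, where Ũ = [[½∂_z w + ½(∂_z H)·ε̃·exp(−w/2)·e^{u/2}, −ε̃·exp(w/2)], [B·ε̃·exp(−w/2), 0]] and Ṽ = [[0, −B̄·ε̃·exp(−w/2)], [ε̃·exp(w/2), ½∂_z̄ w + ½(∂_z̄ H)·ε̃·exp(−w/2)·e^{u/2}]]; conversely, any such ψ̃ solving this system satisfies the nonlinear Dirac equations above. -/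
noncomputable section

def dzRow (f : Cp → Matrix (Fin 1) (Fin 2) Cp) (p : Cp) : Matrix (Fin 1) (Fin 2) Cp :=
  Matrix.of fun i j => dz (fun q => f q i j) p

def dzbarRow (f : Cp → Matrix (Fin 1) (Fin 2) Cp) (p : Cp) : Matrix (Fin 1) (Fin 2) Cp :=
  Matrix.of fun i j => dzbar (fun q => f q i j) p

/-!
The second columns of the two Lax equations are literally the Dirac equations, since
`Ũ₁₂ = -𝒰` and `Ṽ₂₁ = 𝒰`. For the first columns, multiply by `𝒰 = ε̃ exp(w/2)`, which is
invertible with inverse `ε̃ exp(-w/2)` because `ε̃² = 1`, and use `∂𝒰 = ½ 𝒰 ∂w`: they become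
`𝒰 ∂_z ψ₁ = ψ₁ (∂_z 𝒰 + ½ (∂_z H) e^{u/2}) + ψ₂ B` and its `∂_z̄` analogue. Expanding `∂_z 𝒰`
by the Leibniz rule and eliminating `∂_z ψ₂` and `∂_z ψ̄₁ = conj (∂_z̄ ψ₁)` by the Dirac
equations turns these into polynomial identities in `ℝ × ℝ`, checked componentwise.
-/

open Filter Topology

lemma pconj_mul (a b : Cp) : pconj (a * b) = pconj a * pconj b := rfl
lemma pconj_neg (a : Cp) : pconj (-a) = -pconj a := rfl
lemma pconj_ip : pconj ip = -ip := by ext <;> simp [pconj, ip]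

lemma prodComm_apply_eq_pconj (z : Cp) : ContinuousLinearEquiv.prodComm ℝ ℝ ℝ z = pconj z := rfl

@[fun_prop]
lemma DifferentiableAt.pconj {f : Cp → Cp} {p : Cp} (hf : DifferentiableAt ℝ f p) :
    DifferentiableAt ℝ (fun r => pconj (f r)) p :=
  (ContinuousLinearEquiv.prodComm ℝ ℝ ℝ).differentiableAt.comp p hf

@[fun_prop]
lemma DifferentiableAt.oR {H : Cp → ℝ} {p : Cp} (hH : DifferentiableAt ℝ H p) :
    DifferentiableAt ℝ (fun r => oR (H r)) p :=
  hH.prodMk hH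

lemma div_two_eq_oR_mul (z : Cp) : z / 2 = oR (1/2) * z := by
  ext <;> simp [oR] <;> ring

lemma pexp_neg_mul_pexp (a : Cp) : pexp (-a) * pexp a = 1 := by
  ext <;> simp [pexp, ← Real.exp_add]

lemma mul_self_eq_one_of_eq_pm_one_or_pm_ip {ε : Cp}
    (hε : ε = 1 ∨ ε = -1 ∨ ε = ip ∨ ε = -ip) : ε * ε = 1 := by
  rcases hε with rfl | rfl | rfl | rfl <;> ext <;> simp [ip]

lemma mul_pexp_neg_half_mul_mul_pexp_half {ε : Cp} (hε : ε * ε = 1) (x : Cp) :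
    ε * pexp (-x / 2) * (ε * pexp (x / 2)) = 1 := by
  rw [neg_div, mul_mul_mul_comm, hε, pexp_neg_mul_pexp, one_mul]

lemma pexp_eq_exp : pexp = NormedSpace.exp := by
  funext z; ext <;> simp [pexp, Real.exp_eq_exp_ℝ]

lemma differentiable_pexp : Differentiable ℝ pexp := by
  rw [pexp_eq_exp]; exact fun _ => (hasFDerivAt_exp (𝕂 := ℝ)).differentiableAt

def pderiv (s : Cp) (f : Cp → Cp) (p : Cp) : Cp :=
  oR (1/2) * (fderiv ℝ f p (1, 0) + s * fderiv ℝ f p (0, 1))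

lemma dz_eq_pderiv (f : Cp → Cp) (p : Cp) : dz f p = pderiv ip f p := rfl

lemma dzbar_eq_pderiv (f : Cp → Cp) (p : Cp) : dzbar f p = pderiv (-ip) f p := by
  simp [dzbar, pderiv, sub_eq_add_neg]

section pderiv

variable {s : Cp} {f g : Cp → Cp} {p : Cp}

lemma pderiv_congr (h : f =ᶠ[𝓝 p] g) : pderiv s f p = pderiv s g p := by
  simp [pderiv, h.fderiv_eq]

lemma pderiv_const (c : Cp) : pderiv s (fun _ => c) p = 0 := by
  simp [pderiv]

lemma pderiv_add (hf : DifferentiableAt ℝ f p) (hg : DifferentiableAt ℝ g p) :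
    pderiv s (fun r => f r + g r) p = pderiv s f p + pderiv s g p := by
  simp only [pderiv, fderiv_fun_add hf hg, add_apply]; ring

lemma pderiv_sub (hf : DifferentiableAt ℝ f p) (hg : DifferentiableAt ℝ g p) :
    pderiv s (fun r => f r - g r) p = pderiv s f p - pderiv s g p := by
  simp only [pderiv, fderiv_fun_sub hf hg, sub_apply]; ring

lemma pderiv_neg : pderiv s (fun r => -f r) p = -pderiv s f p := by
  simp only [pderiv, fderiv_fun_neg, neg_apply]; ring

lemma pderiv_mul (hf : DifferentiableAt ℝ f p) (hg : DifferentiableAt ℝ g p) :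
    pderiv s (fun r => f r * g r) p = f p * pderiv s g p + g p * pderiv s f p := by
  simp only [pderiv, fderiv_fun_mul hf hg, add_apply, smul_apply, smul_eq_mul]; ring

lemma pderiv_const_mul (c : Cp) (hf : DifferentiableAt ℝ f p) :
    pderiv s (fun r => c * f r) p = c * pderiv s f p := by
  rw [pderiv_mul (differentiableAt_const c) hf, pderiv_const, mul_zero, add_zero]

lemma pderiv_pconj (hf : DifferentiableAt ℝ f p) :
    pderiv s (fun r => pconj (f r)) p = pconj (pderiv (pconj s) f p) := by
  have h := ((ContinuousLinearEquiv.prodComm ℝ ℝ ℝ).hasFDerivAt.comp p hf.hasFDerivAt).fderiv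
  simp only [pderiv, Function.comp_def, prodComm_apply_eq_pconj] at h ⊢
  simp only [h, ContinuousLinearMap.comp_apply]
  ext <;> simp [pconj, oR]

lemma pderiv_pexp (hf : DifferentiableAt ℝ f p) :
    pderiv s (fun r => pexp (f r)) p = pexp (f p) * pderiv s f p := by
  have h : fderiv ℝ (fun r => pexp (f r)) p
      = (pexp (f p) • 1 : Cp →L[ℝ] Cp).comp (fderiv ℝ f p) := by
    rw [pexp_eq_exp]; exact (hasFDerivAt_exp.comp p hf.hasFDerivAt).fderiv
  simp only [pderiv, h, ContinuousLinearMap.comp_apply, smul_apply,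
    one_apply_eq_self, smul_eq_mul]
  ring

end pderiv

lemma pderiv_eq_mul_of_eventuallyEq_pexp {s ε p : Cp} {U w : Cp → Cp}
    (hw : DifferentiableAt ℝ w p) (hU : U =ᶠ[𝓝 p] fun r => ε * pexp (w r / 2)) :
    pderiv s U p = U p * (oR (1/2) * pderiv s w p) := by
  have hw' : DifferentiableAt ℝ (fun r => oR (1/2) * w r) p := hw.const_mul _
  simp only [div_two_eq_oR_mul] at hU
  rw [pderiv_congr hU, hU.eq_of_nhds,
    pderiv_const_mul (f := fun r => pexp _) _ ((differentiable_pexp _).comp p hw'),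
    pderiv_pexp hw', pderiv_const_mul _ hw]
  ring

def diracPotential (H : ℝ) (a b : Cp) : Cp :=
  -(oR H * (b * pconj b + a * pconj a)) + ip * oR (1/2) * (b * pconj b - a * pconj a)

lemma eq_diracPotential {ψ₁ ψ₂ eu h U : Cp → Cp} {H : Cp → ℝ}
    (heu : ∀ q, eu q = 2 * (ψ₂ q * pconj (ψ₂ q) + ψ₁ q * pconj (ψ₁ q)))
    (hh : ∀ q, h q = 2 * (ψ₂ q * pconj (ψ₂ q) - ψ₁ q * pconj (ψ₁ q)))
    (hU : ∀ q, U q = -(oR (H q) / 2) * eu q + ip / 4 * h q) :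
    U = fun r => diracPotential (H r) (ψ₁ r) (ψ₂ r) := by
  funext r
  rw [hU, heu, hh]
  ext <;> simp [diracPotential, oR, ip, pconj] <;> ring

lemma pderiv_diracPotential {s p : Cp} {H : Cp → ℝ} {ψ₁ ψ₂ : Cp → Cp}
    (hH : DifferentiableAt ℝ H p) (hψ₁ : DifferentiableAt ℝ ψ₁ p)
    (hψ₂ : DifferentiableAt ℝ ψ₂ p) :
    pderiv s (fun r => diracPotential (H r) (ψ₁ r) (ψ₂ r)) p
      = -(oR (H p) * (ψ₂ p * pderiv s (fun r => pconj (ψ₂ r)) p + pconj (ψ₂ p) * pderiv s ψ₂ p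
            + (ψ₁ p * pderiv s (fun r => pconj (ψ₁ r)) p + pconj (ψ₁ p) * pderiv s ψ₁ p))
          + (ψ₂ p * pconj (ψ₂ p) + ψ₁ p * pconj (ψ₁ p)) * pderiv s (fun r => oR (H r)) p)
        + ip * oR (1/2) * (ψ₂ p * pderiv s (fun r => pconj (ψ₂ r)) p + pconj (ψ₂ p) * pderiv s ψ₂ p
            - (ψ₁ p * pderiv s (fun r => pconj (ψ₁ r)) p + pconj (ψ₁ p) * pderiv s ψ₁ p)) := by
  simp (disch := fun_prop) only [diracPotential, pderiv_add, pderiv_sub, pderiv_neg, pderiv_mul,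
    pderiv_const]
  ring

-- `da`, `db`, `db'`, `da'` stand for `∂_z` of `ψ₁`, `ψ₂`, `ψ̄₂`, `ψ̄₁`; `hdb` and `hda'` are the
-- Dirac equations at the point, the second one conjugated.
lemma diracPotential_mul_dz_eq {H : ℝ} {Hz a b da db db' da' dU B : Cp}
    (hdb : db = -(diracPotential H a b * a))
    (hda' : da' = pconj (diracPotential H a b) * pconj b)
    (hdU : dU = -(oR H * (b * db' + pconj b * db + (a * da' + pconj a * da))
          + (b * pconj b + a * pconj a) * Hz)
        + ip * oR (1/2) * (b * db' + pconj b * db - (a * da' + pconj a * da)))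
    (hB : B = oR (1/4) * (2 * oR H - ip) * (2 * (a * db' - pconj b * da)
        - 4 * ip * a ^ 2 * pconj b ^ 2) - oR (1/4) * (2 * a * pconj b) ^ 2) :
    diracPotential H a b * da
      = a * (dU + oR (1/2) * Hz * (2 * (b * pconj b + a * pconj a))) + b * B := by
  subst hdb hda' hdU hB
  ext <;> simp [diracPotential, oR, ip, pconj] <;> ring

-- `da`, `db`, `db'` stand for `∂_z̄` of `ψ₁`, `ψ₂`, `ψ̄₂`, and `dza` for `∂_z ψ₁`, whose conjugate is
-- `∂_z̄ ψ̄₁`; `hda` and `hdb'` are the Dirac equations at the point,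
-- the first one conjugated.
lemma diracPotential_mul_dzbar_eq {H : ℝ} {Hz a b da db db' dza dU B : Cp}
    (hda : da = diracPotential H a b * b)
    (hdb' : db' = -(pconj (diracPotential H a b) * pconj a))
    (hdU : dU = -(oR H * (b * db' + pconj b * db + (a * pconj dza + pconj a * da))
          + (b * pconj b + a * pconj a) * Hz)
        + ip * oR (1/2) * (b * db' + pconj b * db - (a * pconj dza + pconj a * da)))
    (hB : B = oR (1/4) * (2 * oR H - ip) * (2 * (a * pconj db - pconj b * dza)
        - 4 * ip * a ^ 2 * pconj b ^ 2) - oR (1/4) * (2 * a * pconj b) ^ 2) :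
    diracPotential H a b * db
      = a * -pconj B + b * (dU + oR (1/2) * Hz * (2 * (b * pconj b + a * pconj a))) := by
  subst hda hdb' hdU hB
  ext <;> simp [diracPotential, oR, ip, pconj] <;> ring

lemma lax_first_column_of_dirac {ψ₁ ψ₂ w : Cp → Cp} {H : Cp → ℝ} {ε p e B : Cp}
    (hψ₁ : DifferentiableAt ℝ ψ₁ p) (hψ₂ : DifferentiableAt ℝ ψ₂ p)
    (hH : DifferentiableAt ℝ H p) (hw : DifferentiableAt ℝ w p)
    (hUw : (fun r => diracPotential (H r) (ψ₁ r) (ψ₂ r)) =ᶠ[𝓝 p] fun r => ε * pexp (w r / 2))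
    (hε : ε * ε = 1)
    (h₁ : dz ψ₂ p = -(diracPotential (H p) (ψ₁ p) (ψ₂ p) * ψ₁ p))
    (h₂ : dzbar ψ₁ p = diracPotential (H p) (ψ₁ p) (ψ₂ p) * ψ₂ p)
    (he : e = 2 * (ψ₂ p * pconj (ψ₂ p) + ψ₁ p * pconj (ψ₁ p)))
    (hB : B = oR (1/4) * (2 * oR (H p) - ip) * (2 * (ψ₁ p * dz (fun r => pconj (ψ₂ r)) p
        - pconj (ψ₂ p) * dz ψ₁ p) - 4 * ip * ψ₁ p ^ 2 * pconj (ψ₂ p) ^ 2)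
        - oR (1/4) * (2 * ψ₁ p * pconj (ψ₂ p)) ^ 2) :
    dz ψ₁ p = ψ₁ p * (oR (1/2) * dz w p
        + oR (1/2) * dz (fun r => oR (H r)) p * ε * pexp (-(w p) / 2) * e)
      + ψ₂ p * (B * ε * pexp (-(w p) / 2)) ∧
    dzbar ψ₂ p = ψ₁ p * -(pconj B * ε * pexp (-(w p) / 2))
      + ψ₂ p * (oR (1/2) * dzbar w p
        + oR (1/2) * dzbar (fun r => oR (H r)) p * ε * pexp (-(w p) / 2) * e) := by
  have hinv := mul_pexp_neg_half_mul_mul_pexp_half hε (w p)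
  rw [← hUw.eq_of_nhds] at hinv
  simp only [dz_eq_pderiv, dzbar_eq_pderiv] at h₁ h₂ hB
  constructor
  · have key := diracPotential_mul_dz_eq h₁
      (by rw [pderiv_pconj hψ₁, pconj_ip, h₂, pconj_mul]) (pderiv_diracPotential hH hψ₁ hψ₂) hB
    rw [pderiv_eq_mul_of_eventuallyEq_pexp hw hUw, ← he] at key
    simp only [← dz_eq_pderiv] at key
    linear_combination (ε * pexp (-(w p) / 2)) * key
      + (ψ₁ p * (oR (1/2) * dz w p) - dz ψ₁ p) * hinv
  · rw [pderiv_pconj hψ₂, pconj_ip] at hB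
    have hdU := pderiv_diracPotential (s := -ip) hH hψ₁ hψ₂
    rw [pderiv_pconj hψ₁, pconj_neg, pconj_ip, neg_neg] at hdU
    have key := diracPotential_mul_dzbar_eq h₂
      (by rw [pderiv_pconj hψ₂, pconj_neg, pconj_ip, neg_neg, h₁, pconj_neg, pconj_mul]) hdU hB
    rw [pderiv_eq_mul_of_eventuallyEq_pexp hw hUw, ← he] at key
    simp only [← dzbar_eq_pderiv] at key
    linear_combination (ε * pexp (-(w p) / 2)) * key
      + (ψ₂ p * (oR (1/2) * dzbar w p) - dzbar ψ₂ p) * hinv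

lemma dzRow_row (f g : Cp → Cp) (p : Cp) :
    dzRow (fun r => !![f r, g r]) p = !![dz f p, dz g p] :=
  Matrix.ext fun i j => by fin_cases i; fin_cases j <;> rfl

lemma dzbarRow_row (f g : Cp → Cp) (p : Cp) :
    dzbarRow (fun r => !![f r, g r]) p = !![dzbar f p, dzbar g p] :=
  Matrix.ext fun i j => by fin_cases i; fin_cases j <;> rfl

lemma row_eq_row_mul_iff {R : Type*} [NonUnitalNonAssocSemiring R]
    {x y a b m₀₀ m₀₁ m₁₀ m₁₁ : R} :
    !![x, y] = !![a, b] * !![m₀₀, m₀₁; m₁₀, m₁₁]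
      ↔ x = a * m₀₀ + b * m₁₀ ∧ y = a * m₀₁ + b * m₁₁ := by
  simp

/-- The nonlinear Dirac equation for (ψ₁, ψ₂) with potential 𝒰 = ε̃·exp(w/2) is
equivalent to the Lax pair system ∂_zψ̃ = ψ̃Ũ, ∂_z̄ψ̃ = ψ̃Ṽ for the row vector
ψ̃ = (ψ₁, ψ₂). -/
theorem lax_pair_equiv_dirac (D : Set Cp) (hD : IsOpen D)
    (ψ₁ ψ₂ : Cp → Cp) (H : Cp → ℝ)
    (hψ₁ : ContDiffOn ℝ 1 ψ₁ D) (hψ₂ : ContDiffOn ℝ 1 ψ₂ D)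
    (hHreg : ContDiffOn ℝ 1 H D)
    (w : Cp → Cp) (hwreg : ContDiffOn ℝ 1 w D)
    (ε : Cp) (hε : ε = 1 ∨ ε = -1 ∨ ε = ip ∨ ε = -ip)
    (eu h U φ₃ A B : Cp → Cp)
    (heu : ∀ q, eu q = 2 * (ψ₂ q * pconj (ψ₂ q) + ψ₁ q * pconj (ψ₁ q)))
    (hh : ∀ q, h q = 2 * (ψ₂ q * pconj (ψ₂ q) - ψ₁ q * pconj (ψ₁ q)))
    (hU : ∀ q, U q = -(oR (H q) / 2) * eu q + ip / 4 * h q)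
    (hUw : ∀ q ∈ D, U q = ε * pexp (w q / 2))
    (hφ₃ : ∀ q, φ₃ q = 2 * ψ₁ q * pconj (ψ₂ q))
    (hA : ∀ q, A q = 2 * (ψ₁ q * dz (fun r => pconj (ψ₂ r)) q
        - pconj (ψ₂ q) * dz ψ₁ q) - 4 * ip * (ψ₁ q) ^ 2 * (pconj (ψ₂ q)) ^ 2)
    (hB : ∀ q, B q = oR (1/4) * (2 * oR (H q) - ip) * A q - oR (1/4) * (φ₃ q) ^ 2) :
    (∀ q ∈ D, dz ψ₂ q + U q * ψ₁ q = 0 ∧ -(dzbar ψ₁ q) + U q * ψ₂ q = 0)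
    ↔ (∀ q ∈ D,
        dzRow (fun r => !![ψ₁ r, ψ₂ r]) q =
          !![ψ₁ q, ψ₂ q] *
            !![oR (1/2) * dz w q
                  + oR (1/2) * dz (fun r => oR (H r)) q * ε * pexp (-(w q) / 2) * eu q,
                -(ε * pexp (w q / 2));
               B q * ε * pexp (-(w q) / 2), 0] ∧
        dzbarRow (fun r => !![ψ₁ r, ψ₂ r]) q =
          !![ψ₁ q, ψ₂ q] *
            !![0, -(pconj (B q) * ε * pexp (-(w q) / 2));
               ε * pexp (w q / 2),
                oR (1/2) * dzbar w q
                  + oR (1/2) * dzbar (fun r => oR (H r)) q * ε * pexp (-(w q) / 2) * eu q]) := by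
  obtain rfl := eq_diracPotential heu hh hU
  refine forall₂_congr fun q hq => ?_
  have hDq : D ∈ 𝓝 q := hD.mem_nhds hq
  have hd {f : Cp → Cp} (hf : ContDiffOn ℝ 1 f D) : DifferentiableAt ℝ f q :=
    (hf.differentiableOn one_ne_zero).differentiableAt hDq
  have hBq := hB q
  rw [hA, hφ₃] at hBq
  have hfst := lax_first_column_of_dirac (hd hψ₁) (hd hψ₂)
    ((hHreg.differentiableOn one_ne_zero).differentiableAt hDq) (hd hwreg)
    (eventually_of_mem hDq hUw) (mul_self_eq_one_of_eq_pm_one_or_pm_ip hε) (e := eu q) (B := B q)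
  rw [dzRow_row, dzbarRow_row, row_eq_row_mul_iff, row_eq_row_mul_iff, ← hUw q hq]
  constructor
  · rintro ⟨h₁, h₂⟩
    obtain ⟨hdz, hdzbar⟩ :=
      hfst (by linear_combination h₁) (by linear_combination -h₂) (heu q) hBq
    exact ⟨⟨hdz, by linear_combination h₁⟩, by linear_combination -h₂, hdzbar⟩
  · rintro ⟨⟨-, h₁⟩, h₂, -⟩
    exact ⟨by linear_combination h₁, by linear_combination -h₂⟩
end
end

section
/- Let φ₁, φ₂, φ₃ ∈ ℂ′ satisfy the isotropy condition −φ₁² + φ₂² + φ₃² = 0, and suppose the (automatically real) para-complex number −φ₁φ̄₁ + φ₂φ̄₂ + φ₃φ̄₃ has positive real part. Then there exist ε ∈ {i′, −i′} and ψ₁, χ ∈ ℂ′ such that φ₁ = ε(χ² + ψ₁²), φ₂ = ε·i′·(χ² − ψ₁²), and φ₃ = 2ψ₁χ (the generating-spinor representation). -/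
noncomputable section

lemma real_spinor (a c e s : ℝ) (hs : s^2 = 1) (h : a^2 = c^2 + e^2)
    (hsa : 0 ≤ s*a) : ∃ x y : ℝ, s*a = x^2+y^2 ∧ s*c = x^2 - y^2 ∧ e = 2*y*x := by
  have hca : |s*c| ≤ s*a := by
    rw [abs_le]; constructor <;> nlinarith [sq_nonneg (s*a), sq_nonneg e, sq_nonneg (s*c)]
  obtain ⟨hl, hr⟩ := abs_le.mp hca
  have h1 : 0 ≤ (s*a + s*c)/2 := by linarith
  have h2 : 0 ≤ (s*a - s*c)/2 := by linarith
  set sg : ℝ := if e < 0 then -1 else 1 with hsg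
  have hsg2 : sg^2 = 1 := by rw [hsg]; split <;> norm_num
  have hse : sg * |e| = e := by
    rw [hsg]; split
    · rw [abs_of_neg (by assumption)]; ring
    · rw [abs_of_nonneg (by linarith [not_lt.mp (by assumption)])]; ring
  refine ⟨Real.sqrt ((s*a + s*c)/2), sg * Real.sqrt ((s*a - s*c)/2), ?_, ?_, ?_⟩
  · rw [mul_pow, Real.sq_sqrt h1, Real.sq_sqrt h2, hsg2]; ring
  · rw [mul_pow, Real.sq_sqrt h1, Real.sq_sqrt h2, hsg2]; ring
  · have key : Real.sqrt ((s*a - s*c)/2) * Real.sqrt ((s*a + s*c)/2) = |e|/2 := by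
      rw [← Real.sqrt_mul h2]
      have heq : (s*a - s*c)/2 * ((s*a + s*c)/2) = (e/2)^2 := by nlinarith
      rw [heq, Real.sqrt_sq_eq_abs, abs_div]; norm_num
    linear_combination (-2*sg)*key - hse

/-- Generating-spinor representation of an isotropic triple with positive "norm". -/
theorem generating_spinor_representation (φ₁ φ₂ φ₃ : Cp)
    (hiso : -φ₁ ^ 2 + φ₂ ^ 2 + φ₃ ^ 2 = 0)
    (hpos : 0 < pRe (-(φ₁ * pconj φ₁) + φ₂ * pconj φ₂ + φ₃ * pconj φ₃)) :
    ∃ ε : Cp, (ε = ip ∨ ε = -ip) ∧ ∃ ψ₁ χ : Cp,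
      φ₁ = ε * (χ ^ 2 + ψ₁ ^ 2) ∧
      φ₂ = ε * ip * (χ ^ 2 - ψ₁ ^ 2) ∧
      φ₃ = 2 * ψ₁ * χ := by
  obtain ⟨a, b⟩ := φ₁
  obtain ⟨c, d⟩ := φ₂
  obtain ⟨e, f⟩ := φ₃
  have h1 : a^2 = c^2 + e^2 := by
    have := congrArg Prod.fst hiso
    simp [Prod.pow_fst] at this; linarith
  have h2 : b^2 = d^2 + f^2 := by
    have := congrArg Prod.snd hiso
    simp [Prod.pow_snd] at this; linarith
  have hp : 0 < -(a*b) + c*d + e*f := by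
    simp [pRe, pconj, Prod.mul_def] at hpos
    linarith
  have hcs : (c*d + e*f)^2 ≤ a^2 * b^2 := by nlinarith [sq_nonneg (c*f - e*d)]
  have hab : a*b < 0 := by nlinarith [sq_nonneg (c*d + e*f - a*b)]
  set s : ℝ := if 0 < a then 1 else -1 with hsd
  have hs2 : s^2 = 1 := by rw [hsd]; split <;> norm_num
  have hsa : 0 ≤ s * a := by
    rw [hsd]; split
    · linarith
    · have : a ≤ 0 := le_of_not_gt (by assumption); nlinarith
  have hsb : 0 ≤ -s * b := by
    rcases lt_trichotomy a 0 with h | h | h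
    · have hs1 : s = -1 := by rw [hsd, if_neg (by linarith)]
      rw [hs1]; nlinarith
    · exfalso; rw [h] at hab; simp at hab
    · have hs1 : s = 1 := by rw [hsd, if_pos h]
      rw [hs1]; nlinarith
  obtain ⟨x₁, y₁, e11, e12, e13⟩ := real_spinor a c e s hs2 h1 hsa
  obtain ⟨x₂, y₂, e21, e22, e23⟩ := real_spinor b (-d) f (-s) (by nlinarith) (by
    rw [h2]; ring) (by linarith [hsb])
  refine ⟨(s, -s), ?_, (y₁, y₂), (x₁, x₂), ?_, ?_, ?_⟩
  · rw [hsd]; split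
    · left; rfl
    · right; rfl
  · refine Prod.ext ?_ ?_ <;> simp [Prod.mul_def, Prod.pow_fst, Prod.pow_snd]
    · linear_combination s*e11 - a*hs2
    · linear_combination -s*e21 - b*hs2
  · refine Prod.ext ?_ ?_ <;> simp [ip, Prod.mul_def, Prod.pow_fst, Prod.pow_snd]
    · linear_combination s*e12 - c*hs2
    · linear_combination s*e22 - d*hs2
  · refine Prod.ext ?_ ?_ <;> simp [Prod.mul_def]
    · linear_combination e13
    · linear_combination e23
end
end

section
/- Let ψ₁, ψ₂ ∈ ℂ′ and ε ∈ {1, −1, i′, −i′}, and define φ₁ := ε(ψ̄₂² + ψ₁²), φ₂ := ε·i′·(ψ̄₂² − ψ₁²), φ₃ := 2ψ₁ψ̄₂. Then −φ₁² + φ₂² + φ₃² = 0 and −φ₁φ̄₁ + φ₂φ̄₂ + φ₃φ̄₃ = −2·ε·ε̄·(ψ₁ψ̄₁ − ε·ε̄·ψ₂ψ̄₂)². In particular, if ε ∈ {i′, −i′} then −φ₁φ̄₁ + φ₂φ̄₂ + φ₃φ̄₃ = 2(ψ₁ψ̄₁ + ψ₂ψ̄₂)². -/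
noncomputable section

/-- Conformality identities of the generating-spinor representation. -/
theorem spinor_conformality (ψ₁ ψ₂ ε : Cp)
    (hε : ε = 1 ∨ ε = -1 ∨ ε = ip ∨ ε = -ip)
    (φ₁ φ₂ φ₃ : Cp)
    (h1 : φ₁ = ε * ((pconj ψ₂) ^ 2 + ψ₁ ^ 2))
    (h2 : φ₂ = ε * ip * ((pconj ψ₂) ^ 2 - ψ₁ ^ 2))
    (h3 : φ₃ = 2 * ψ₁ * pconj ψ₂) :
    -φ₁ ^ 2 + φ₂ ^ 2 + φ₃ ^ 2 = 0 ∧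
    -(φ₁ * pconj φ₁) + φ₂ * pconj φ₂ + φ₃ * pconj φ₃
      = -2 * (ε * pconj ε) * (ψ₁ * pconj ψ₁ - (ε * pconj ε) * (ψ₂ * pconj ψ₂)) ^ 2 ∧
    ((ε = ip ∨ ε = -ip) →
      -(φ₁ * pconj φ₁) + φ₂ * pconj φ₂ + φ₃ * pconj φ₃
        = 2 * (ψ₁ * pconj ψ₁ + ψ₂ * pconj ψ₂) ^ 2) := by
  obtain ⟨a, b⟩ := ψ₁
  obtain ⟨c, d⟩ := ψ₂
  subst h1 h2 h3
  refine ⟨?_, ?_, ?_⟩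
  · rcases hε with h | h | h | h <;> subst h <;>
      simp only [pconj, ip, Prod.ext_iff, Prod.pow_def, Prod.mk_mul_mk, Prod.mk_add_mk,
        Prod.neg_mk, Prod.fst_one, Prod.snd_one, Prod.fst_neg, Prod.snd_neg] <;>
      constructor <;> simp <;> ring
  · rcases hε with h | h | h | h <;> subst h <;>
      simp only [pconj, ip, Prod.ext_iff, Prod.pow_def, Prod.mk_mul_mk, Prod.mk_add_mk,
        Prod.neg_mk, Prod.fst_one, Prod.snd_one, Prod.fst_neg, Prod.snd_neg] <;>
      constructor <;> simp <;> ring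
  · rintro (h | h) <;> subst h <;>
      simp only [pconj, ip, Prod.ext_iff, Prod.pow_def, Prod.mk_mul_mk, Prod.mk_add_mk,
        Prod.neg_mk, Prod.fst_one, Prod.snd_one, Prod.fst_neg, Prod.snd_neg] <;>
      constructor <;> simp <;> ring
end
end

section
/- Define Θ from the real Lie algebra sl₂ℝ (real 2×2 trace-free matrices with commutator bracket) to the 2×2 matrices over ℂ′ by Θ(X) := ½(X + X*) + ½(X − X*)·i′, where X* := −σ₃·Xᵀ·σ₃ and real matrices are regarded as para-complex matrices entrywise via r ↦ (r,r). Then Θ is an injective homomorphism of real Lie algebras whose image is exactly su′₁,₁; hence sl₂ℝ and su′₁,₁ are isomorphic as real Lie algebras. -/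
noncomputable section

/-- σ₃ as a real matrix. -/
def σ₃R : Matrix (Fin 2) (Fin 2) ℝ := !![1, 0; 0, -1]

/-- X* = −σ₃ Xᵀ σ₃. -/
def Xstar (X : Matrix (Fin 2) (Fin 2) ℝ) : Matrix (Fin 2) (Fin 2) ℝ :=
  -(σ₃R * X.transpose * σ₃R)

/-- Entrywise embedding of real matrices into para-complex matrices. -/
def emb (X : Matrix (Fin 2) (Fin 2) ℝ) : Matrix (Fin 2) (Fin 2) Cp := X.map oR

/-- Θ(X) = ½(X + X*) + ½(X − X*)·i′. -/
def Θ (X : Matrix (Fin 2) (Fin 2) ℝ) : Matrix (Fin 2) (Fin 2) Cp :=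
  ((1 : ℝ)/2) • emb (X + Xstar X) + ((1 : ℝ)/2) • (ip • emb (X - Xstar X))

/-- The real Lie algebra su′₁,₁, as a set of para-complex 2×2 matrices. -/
def suSet : Set (Matrix (Fin 2) (Fin 2) Cp) :=
  {M | ∃ a b c : ℝ,
    M = !![oR c * ip, oR b - oR a * ip; oR b + oR a * ip, -(oR c * ip)]}

lemma Xstar_apply (X : Matrix (Fin 2) (Fin 2) ℝ) :
    Xstar X = !![-X 0 0, X 1 0; X 0 1, -X 1 1] := by
  ext i j
  fin_cases i <;> fin_cases j <;>
    simp [Xstar, σ₃R, Matrix.mul_apply, Fin.sum_univ_two, Matrix.transpose_apply,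
      Matrix.vecMul, Matrix.vecHead, Matrix.vecTail, dotProduct] <;> ring

lemma theta_apply (X : Matrix (Fin 2) (Fin 2) ℝ) (i j : Fin 2) :
    Θ X i j = (X i j, Xstar X i j) := by
  simp only [Θ, emb, Matrix.add_apply, Matrix.smul_apply, Matrix.map_apply,
    Matrix.sub_apply, oR, ip, Prod.smul_mk, Prod.mk_mul_mk, Prod.mk_add_mk,
    smul_eq_mul, Prod.mk.injEq]
  constructor <;> ring

/-- Θ is an injective homomorphism of real Lie algebras from sl₂ℝ (trace-free real
2×2 matrices) onto su′₁,₁; hence sl₂ℝ ≅ su′₁,₁ as real Lie algebras. -/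
theorem sl2R_isomorphic_su11' :
    (∀ (t : ℝ) (X Y : Matrix (Fin 2) (Fin 2) ℝ), Θ (t • X + Y) = t • Θ X + Θ Y) ∧
    (∀ X Y : Matrix (Fin 2) (Fin 2) ℝ, X.trace = 0 → Y.trace = 0 →
      Θ (X * Y - Y * X) = Θ X * Θ Y - Θ Y * Θ X) ∧
    (∀ X Y : Matrix (Fin 2) (Fin 2) ℝ, X.trace = 0 → Y.trace = 0 →
      Θ X = Θ Y → X = Y) ∧
    {M | ∃ X : Matrix (Fin 2) (Fin 2) ℝ, X.trace = 0 ∧ Θ X = M} = suSet := by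
  refine ⟨?_, ?_, ?_, ?_⟩
  · intro t X Y
    ext i j
    all_goals fin_cases i <;> fin_cases j <;>
      simp [theta_apply, Xstar_apply, Matrix.add_apply, Matrix.smul_apply,
        Prod.smul_mk] <;> ring
  · intro X Y _ _
    ext i j
    all_goals fin_cases i <;> fin_cases j <;>
      simp [theta_apply, Xstar_apply, Matrix.sub_apply, Matrix.mul_apply,
        Fin.sum_univ_two, Prod.mk_mul_mk] <;> ring
  · intro X Y _ _ h
    ext i j
    have := congrFun (congrFun h i) j
    rw [theta_apply, theta_apply, Prod.ext_iff] at this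
    exact this.1
  · ext M
    simp only [Set.mem_setOf_eq, suSet]
    constructor
    · rintro ⟨X, hX, rfl⟩
      have htr : X 1 1 = -X 0 0 := by
        have : X 0 0 + X 1 1 = 0 := by
          simpa [Matrix.trace, Fin.sum_univ_two, Matrix.diag] using hX
        linarith
      refine ⟨(X 1 0 - X 0 1)/2, (X 0 1 + X 1 0)/2, X 0 0, ?_⟩
      ext i j
      all_goals fin_cases i <;> fin_cases j <;>
        simp [theta_apply, Xstar_apply, oR, ip, htr, Prod.mk_mul_mk,
          Prod.mk_sub_mk, Prod.mk_add_mk] <;> ring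
    · rintro ⟨a, b, c, rfl⟩
      refine ⟨!![c, b - a; b + a, -c], ?_, ?_⟩
      · simp [Matrix.trace, Fin.sum_univ_two, Matrix.diag]
      · ext i j
        all_goals fin_cases i <;> fin_cases j <;>
          simp [theta_apply, Xstar_apply, oR, ip, Prod.mk_mul_mk,
            Prod.mk_sub_mk, Prod.mk_add_mk] <;> ring
end
end

section
/- Let (aₖ), (bₖ), (cₖ), (dₖ) (k ≥ 1) be real sequences with aₖ = dₖ = 0 for all odd k ≥ 1 and bₖ = cₖ = 0 for all even k ≥ 2. In the 2×2 matrices over the field ℝ((λ)) of formal Laurent series, define Φᵗ := I + Σ_{k≥1} λᵏ·[[aₖ, bₖ],[cₖ, dₖ]] (entries formal power series), Φˢ := [[1, −(s/4)·λ⁻¹],[0, 1]], and, for s ∈ ℝ with 1 + s·c₁/4 ≠ 0, Φ₋ := [[(1 + s·c₁/4)⁻¹, −(s/4)·λ⁻¹],[0, 1 + s·c₁/4]]. Then every entry of the product (Φˢ)⁻¹·Φᵗ·Φ₋ has vanishing coefficient in every negative degree, and its matrix of degree-0 coefficients is the identity matrix. (Hence F̂ := Φᵗ·Φ₋ realizes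 the Birkhoff/Iwasawa factorization used for the B-scroll type minimal surfaces: Φˢ and F̂ differ by a factor in the positive loop group normalized to the identity at λ = 0.) -/
/-!
Write `μ = s / 4`, `e = 1 + μ c₁` and `A, B, C, D` for the entries of `Φᵗ`. In degree `n` the
entries of `(Φˢ)⁻¹ Φᵗ Φ₋` are `e⁻¹ (Aₙ + μ Cₙ₊₁)`, `e (Bₙ + μ Dₙ₊₁) - μ (Aₙ₊₁ + μ Cₙ₊₂)`,
`e⁻¹ Cₙ` and `e Dₙ - μ Cₙ₊₁`. As `A, B, C, D` are power series with `C₀ = 0`, the only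
possibly nonzero coefficient in negative degree is the upper right one in degree `-1`, namely
`e μ - μ - μ² c₁ = 0`. In degree `0` the vanishing of `a₁`, `d₁` and `c₂` leaves the identity.
-/

noncomputable section

/-- A formal power series regarded as a formal Laurent series. -/
def toLS : PowerSeries ℝ →+* LaurentSeries ℝ := HahnSeries.ofPowerSeries ℤ ℝ

open HahnSeries

lemma Matrix.inv_unitriangular_fin_two {R : Type*} [CommRing R] (x : R) :
    !![1, x; 0, 1]⁻¹ = !![1, -x; 0, 1] :=
  Matrix.inv_eq_right_inv (by simp [Matrix.one_fin_two])

lemma coeff_toLS_mk (f : ℕ → ℝ) (n : ℤ) :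
    (toLS (PowerSeries.mk f)).coeff n = if n < 0 then 0 else f n.natAbs := by
  rw [toLS, ← PowerSeries.coeff_mk n.natAbs f]
  exact PowerSeries.coeff_coe (f := PowerSeries.mk f) n

lemma LaurentSeries.coeff_unitriangular_mul_mul {R : Type*} [CommRing R]
    (A B C D : LaurentSeries R) (μ p q : R) (n : ℤ) :
    (Matrix.of fun i j => ((!![1, single (-1) μ; 0, 1] * !![A, B; C, D] *
      !![single 0 p, single (-1) (-μ); 0, single 0 q] : Matrix (Fin 2) (Fin 2) (LaurentSeries R))
        i j).coeff n) =
    !![(A.coeff n + μ * C.coeff (n + 1)) * p,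
       (B.coeff n + μ * D.coeff (n + 1)) * q - (A.coeff (n + 1) + μ * C.coeff (n + 2)) * μ;
       C.coeff n * p, D.coeff n * q - C.coeff (n + 1) * μ] := by
  ext i j
  fin_cases i <;> fin_cases j <;>
    simp [coeff_single_mul, coeff_mul_single, add_assoc, one_add_one_eq_two] <;> ring

/-- Birkhoff/Iwasawa factorization for the B-scroll type minimal surfaces:
(Φˢ)⁻¹·Φᵗ·Φ₋ is a positive loop normalized to the identity at λ = 0. -/
theorem bscroll_factorization (a b c d : ℕ → ℝ)
    (hodd : ∀ k : ℕ, 1 ≤ k → Odd k → a k = 0 ∧ d k = 0)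
    (heven : ∀ k : ℕ, 2 ≤ k → Even k → b k = 0 ∧ c k = 0)
    (s : ℝ) (hs : 1 + s * c 1 / 4 ≠ 0)
    (Φt Φs Φm : Matrix (Fin 2) (Fin 2) (LaurentSeries ℝ))
    (hΦt : Φt = !![toLS (PowerSeries.mk fun k => if k = 0 then 1 else a k),
                   toLS (PowerSeries.mk fun k => if k = 0 then 0 else b k);
                   toLS (PowerSeries.mk fun k => if k = 0 then 0 else c k),
                   toLS (PowerSeries.mk fun k => if k = 0 then 1 else d k)])
    (hΦs : Φs = !![1, HahnSeries.single (-1 : ℤ) (-(s / 4)); 0, 1])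
    (hΦm : Φm = !![HahnSeries.single (0 : ℤ) ((1 + s * c 1 / 4)⁻¹),
                   HahnSeries.single (-1 : ℤ) (-(s / 4));
                   0, HahnSeries.single (0 : ℤ) (1 + s * c 1 / 4)]) :
    (∀ i j : Fin 2, ∀ n : ℤ, n < 0 → ((Φs⁻¹ * Φt * Φm) i j).coeff n = 0) ∧
    (Matrix.of fun i j : Fin 2 => ((Φs⁻¹ * Φt * Φm) i j).coeff 0)
      = (1 : Matrix (Fin 2) (Fin 2) ℝ) := by
  obtain ⟨ha₁, hd₁⟩ := hodd 1 le_rfl odd_one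
  have hc₂ : c 2 = 0 := (heven 2 le_rfl even_two).2
  have hΦs_inv : Φs⁻¹ = !![1, single (-1) (s / 4); 0, 1] := by
    rw [hΦs, Matrix.inv_unitriangular_fin_two, ← single_neg, neg_neg]
  have hcoeff := LaurentSeries.coeff_unitriangular_mul_mul
    (Φt 0 0) (Φt 0 1) (Φt 1 0) (Φt 1 1) (s / 4) (1 + s * c 1 / 4)⁻¹ (1 + s * c 1 / 4)
  simp only [hΦt, Matrix.of_apply, Matrix.cons_val_zero, Matrix.cons_val_one, coeff_toLS_mk]
    at hcoeff
  rw [hΦs_inv, hΦt, hΦm]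
  refine ⟨fun i j n hn => ?_, ?_⟩
  · refine (congrFun₂ (hcoeff n) i j).trans ?_
    obtain hn | rfl | rfl : n ≤ -3 ∨ n = -2 ∨ n = -1 := by omega
    · fin_cases i <;> fin_cases j <;>
        simp [show n < 0 by omega, show n + 1 < 0 by omega, show n + 2 < 0 by omega]
    · fin_cases i <;> fin_cases j <;> norm_num
    · fin_cases i <;> fin_cases j <;> norm_num
      ring
  · rw [hcoeff]
    ext i j
    fin_cases i <;> fin_cases j <;> norm_num [ha₁, hd₁, hc₂]
    · exact (mul_inv_eq_one₀ hs).2 (by ring)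
    · ring
end
end

section
/- Let ψ₁, ψ₂ ∈ ℂ′ and ε ∈ {i′, −i′}, and define φ₁ := ε(ψ̄₂² + ψ₁²), φ₂ := ε·i′·(ψ̄₂² − ψ₁²), φ₃ := 2·i′·ψ₁ψ̄₂. Then φ₂² − φ₁² + φ₃² = 0 and φ₂φ̄₂ − φ₁φ̄₁ + φ₃φ̄₃ = 2(ψ₂ψ̄₂ − ψ₁ψ̄₁)². (These are the conformality identities, with respect to the Minkowski metric of signature (+,−,+) applied to the ordered triple (φ₂, φ₁, φ₃), of the Weierstrass integrand for timelike surfaces in Minkowski 3-space; the conformal factor is 4(ψ₂ψ̄₂ − ψ₁ψ̄₁)².) -/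
noncomputable section

/-- Conformality identities of the Weierstrass integrand for timelike surfaces in
Minkowski 3-space with signature (+,−,+) applied to (φ₂, φ₁, φ₃). -/
theorem minkowski_spinor_conformality (ψ₁ ψ₂ ε : Cp)
    (hε : ε = ip ∨ ε = -ip)
    (φ₁ φ₂ φ₃ : Cp)
    (h1 : φ₁ = ε * ((pconj ψ₂) ^ 2 + ψ₁ ^ 2))
    (h2 : φ₂ = ε * ip * ((pconj ψ₂) ^ 2 - ψ₁ ^ 2))
    (h3 : φ₃ = 2 * ip * ψ₁ * pconj ψ₂) :
    φ₂ ^ 2 - φ₁ ^ 2 + φ₃ ^ 2 = 0 ∧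
    φ₂ * pconj φ₂ - φ₁ * pconj φ₁ + φ₃ * pconj φ₃
      = 2 * (ψ₂ * pconj ψ₂ - ψ₁ * pconj ψ₁) ^ 2 := by
  obtain ⟨a,b⟩ := ψ₁
  obtain ⟨c,d⟩ := ψ₂
  subst h1 h2 h3
  rcases hε with h | h <;> subst h <;>
    constructor <;>
  · show Prod.mk _ _ = Prod.mk _ _
    simp only [ip, pconj, Prod.mk_mul_mk, Prod.mk_add_mk, Prod.mk_sub_mk, Prod.pow_mk,
      Prod.neg_mk, Prod.fst, Prod.snd]
    norm_num [Prod.ext_iff, Prod.mul_def]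
    ring_nf
    norm_num
end
end
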